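/- For the discrete intervals hypergraph on n = 2^k - 1 vertices, there exists a unique-maximum coloring using k colors. -/

import Mathlib

def IsUMColoring (E : Finset (Finset ℕ)) (C : ℕ → ℕ) : Prop :=
  ∀ e ∈ E, e.Nonempty → ∃ x ∈ e, ∀ y ∈ e, y ≠ x → C y < C x

/-- The hyperedges of the discrete intervals hypergraph on `{1, …, n}`. -/
def intervalEdges (n : ℕ) : Finset (Finset ℕ) :=
  ((Finset.Icc 1 n ×ˢ Finset.Icc 1 n).filter (fun p => p.1 ≤ p.2)).image
    (fun p => Finset.Icc p.1 p.2)

/-!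
Unrolling the recursive construction (the median `2^(k-1)` gets the top colour, then recurse on
both halves) colours `v` by its 2-adic valuation `ν₂ v`, with colours `0, …, k-1`. Below `2^k` every
valuation is `< k`. If two points `x < y` of an interval had the same maximal valuation `m`, then
`x / 2^m` and `y / 2^m` would be distinct odd numbers, so `x + 2^m ≤ y` would be a point of the
interval with valuation `> m`.
-/

open Finset

lemma padicValNat_lt_of_lt_pow {p n k : ℕ} (hn0 : n ≠ 0) (hn : n < p ^ k) :
    padicValNat p n < k :=
  (padicValNat_le_nat_log n).trans_lt (Nat.log_lt_of_lt_pow hn0 hn)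

lemma exists_two_pow_succ_dvd_between {m x y : ℕ} (hx : 2 ^ m ∣ x) (hy : 2 ^ m ∣ y)
    (hx' : ¬ 2 ^ (m + 1) ∣ x) (hxy : x < y) : ∃ z, x < z ∧ z ≤ y ∧ 2 ^ (m + 1) ∣ z := by
  obtain ⟨a, rfl⟩ := hx
  have ha : Odd a := Nat.not_even_iff_odd.mp fun ⟨b, hb⟩ => hx' ⟨b, by rw [hb]; ring⟩
  obtain ⟨b, rfl⟩ := ha
  have hgap : 2 ^ m ≤ y - 2 ^ m * (2 * b + 1) :=
    Nat.le_of_dvd (by omega) (Nat.dvd_sub hy (dvd_mul_right _ _))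
  exact ⟨2 ^ m * (2 * b + 1) + 2 ^ m, Nat.lt_add_of_pos_right (Nat.two_pow_pos m), by omega,
    ⟨b + 1, by ring⟩⟩

lemma exists_padicValNat_two_gt_between {x y : ℕ} (hx : x ≠ 0) (hxy : x < y)
    (h : padicValNat 2 x = padicValNat 2 y) :
    ∃ z, x < z ∧ z ≤ y ∧ padicValNat 2 x < padicValNat 2 z := by
  obtain ⟨z, hxz, hzy, hz⟩ := exists_two_pow_succ_dvd_between pow_padicValNat_dvd
    (h ▸ pow_padicValNat_dvd) (pow_succ_padicValNat_not_dvd hx) hxy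
  exact ⟨z, hxz, hzy, (padicValNat_dvd_iff_le (by omega)).mp hz⟩

lemma exists_unique_max_padicValNat_two_Icc {a b : ℕ} (ha : a ≠ 0) (hab : a ≤ b) :
    ∃ x ∈ Icc a b, ∀ y ∈ Icc a b, y ≠ x → padicValNat 2 y < padicValNat 2 x := by
  obtain ⟨x, hx, hmax⟩ := exists_max_image (Icc a b) (padicValNat 2) (nonempty_Icc.mpr hab)
  refine ⟨x, hx, fun y hy hyx => (hmax y hy).lt_of_ne fun hxy => ?_⟩
  rw [mem_Icc] at hx hy
  have no_higher_between {u v : ℕ} (hu : a ≤ u) (hv : v ≤ b) :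
      ¬ ∃ z, u < z ∧ z ≤ v ∧ padicValNat 2 x < padicValNat 2 z := fun ⟨z, huz, hzv, hz⟩ =>
    (hmax z (mem_Icc.mpr ⟨by omega, by omega⟩)).not_gt hz
  rcases hyx.lt_or_gt with hlt | hgt
  · exact no_higher_between hy.1 hx.2 (hxy ▸ exists_padicValNat_two_gt_between (by omega) hlt hxy)
  · exact no_higher_between hx.1 hy.2 (exists_padicValNat_two_gt_between (by omega) hgt hxy.symm)

lemma exists_eq_Icc_of_mem_intervalEdges {n : ℕ} {e : Finset ℕ} (he : e ∈ intervalEdges n) :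
    ∃ a b, 1 ≤ a ∧ a ≤ b ∧ e = Icc a b := by
  simp only [intervalEdges, mem_image, mem_filter, mem_product, mem_Icc] at he
  obtain ⟨⟨a, b⟩, ⟨⟨⟨ha, -⟩, -⟩, hab⟩, rfl⟩ := he
  exact ⟨a, b, ha, hab, rfl⟩

theorem isUMColoring_intervalEdges_padicValNat_two (n : ℕ) :
    IsUMColoring (intervalEdges n) (padicValNat 2) := by
  intro e he _
  obtain ⟨a, b, ha, hab, rfl⟩ := exists_eq_Icc_of_mem_intervalEdges he
  exact exists_unique_max_padicValNat_two_Icc (by omega) hab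

/-- The discrete intervals hypergraph on `n = 2^k - 1` vertices admits a
unique-maximum coloring with `k` colors. -/
theorem um_coloring_of_pow_sub_one (k : ℕ) :
    ∃ C : ℕ → ℕ, (∀ v ∈ Finset.Icc 1 (2 ^ k - 1), C v < k) ∧
      IsUMColoring (intervalEdges (2 ^ k - 1)) C := by
  refine ⟨padicValNat 2, fun v hv => ?_, isUMColoring_intervalEdges_padicValNat_two _⟩
  have hv := mem_Icc.mp hv
  exact padicValNat_lt_of_lt_pow (by omega) (by omega)
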